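/- Let A be a real d×n matrix of rank d with Plücker coordinates x_I = det(A_I) for d-subsets I, and let P = Aᵀ(AAᵀ)⁻¹A. Then for each i, the diagonal entry p_ii equals (∑_{I ∋ i} x_I²)/(∑_I x_I²), where the numerator sum ranges over d-subsets I containing i. -/

import Mathlib

/-!
Give column `i` weight 2: put `D = diagonal w` with `w i = 2` and `w j = 1` otherwise. By
Cauchy–Binet, `det (A D Aᵀ) = ∑_I (∏_{j ∈ I} w j) x_I² = ∑_I x_I² + ∑_{I ∋ i} x_I²`, and the
case `D = 1` gives `det (A Aᵀ) = ∑_I x_I²`, which is nonzero since `A` has rank `d`. On the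
other hand `A D Aᵀ = A Aᵀ + v vᵀ` with `v` the `i`-th column of `A`, so the matrix determinant
lemma gives `det (A D Aᵀ) = det (A Aᵀ) (1 + vᵀ (A Aᵀ)⁻¹ v) = det (A Aᵀ) (1 + p_ii)`.
-/

open Matrix Finset

namespace Finset

theorem sum_eq_sum_orderEmbOfFin_comp_perm {M ι : Type*} [AddCommMonoid M] [Fintype ι]
    [LinearOrder ι] {d : ℕ} (T : (Fin d → ι) → M)
    (hT : ∀ f, ¬ Function.Injective f → T f = 0) :
    ∑ f, T f = ∑ s : {s : Finset ι // s.card = d}, ∑ σ : Equiv.Perm (Fin d),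
      T (s.1.orderEmbOfFin s.2 ∘ σ) := by
  classical
  rw [← Fintype.sum_prod_type',
    ← sum_filter_of_ne (p := Function.Injective) fun f _ hf => not_not.mp (mt (hT f) hf)]
  symm
  refine sum_nbij (fun p => p.1.1.orderEmbOfFin p.1.2 ∘ p.2) ?_ ?_ ?_ fun _ _ => rfl
  · intro p _
    simpa using (p.1.1.orderEmbOfFin p.1.2).injective.comp p.2.injective
  · rintro ⟨⟨s, hs⟩, σ⟩ - ⟨⟨t, ht⟩, τ⟩ - h
    obtain rfl : s = t := by
      simpa [EquivLike.range_comp] using congrArg Set.range h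
    exact Prod.ext rfl (Equiv.ext fun k => (s.orderEmbOfFin hs).injective (congrFun h k))
  · intro f hf
    simp only [coe_filter, mem_univ, true_and, Set.mem_ofPred_eq] at hf
    have hcard : (univ.image f).card = d := by
      rw [card_image_of_injective _ hf, card_univ, Fintype.card_fin]
    let e := (univ.image f).orderIsoOfFin hcard
    let σ : Fin d → Fin d := fun k => e.symm ⟨f k, mem_image_of_mem f (mem_univ k)⟩
    have hσ : Function.Injective σ := fun a b hab => hf (by simpa [σ] using congrArg e hab)
    refine ⟨(⟨_, hcard⟩, Equiv.ofBijective σ hσ.bijective_of_finite), by simp, ?_⟩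
    ext k
    simp [σ, e, ← coe_orderIsoOfFin_apply]

theorem sum_card_eq_and_mem_eq_sum_ite {M ι : Type*} [AddCommMonoid M] [Fintype ι]
    [DecidableEq ι] {d : ℕ} (i : ι) (f : (s : Finset ι) → s.card = d → M) :
    ∑ s : {s : Finset ι // s.card = d ∧ i ∈ s}, f s.1 s.2.1 =
      ∑ s : {s : Finset ι // s.card = d}, if i ∈ s.1 then f s.1 s.2 else 0 := by
  rw [← sum_filter]
  exact sum_bij' (fun s _ => ⟨s.1, s.2.1⟩) (fun s hs => ⟨s.1, s.2, (mem_filter.mp hs).2⟩)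
    (by simp) (by simp) (by simp) (by simp) (by simp)

end Finset

namespace Matrix

variable {R : Type*} [CommRing R]

theorem det_mul_eq_sum_prod_mul_det_submatrix {m ι : Type*} [Fintype m] [DecidableEq m]
    [Fintype ι] (A : Matrix m ι R) (B : Matrix ι m R) :
    (A * B).det = ∑ f : m → ι, (∏ k, A k (f k)) * (B.submatrix f id).det := by
  have hrows : A * B = fun k => ∑ j, A k j • B j := by
    ext k l; simp [mul_apply, Finset.sum_apply]
  change (detRowAlternating (R := R)).toMultilinearMap (A * B) = _
  rw [hrows, MultilinearMap.map_sum]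
  refine sum_congr rfl fun f _ => ?_
  rw [MultilinearMap.map_smul_univ, smul_eq_mul]
  rfl

theorem det_mul_eq_sum_det_submatrix_mul_det_submatrix {ι : Type*} [Fintype ι] [LinearOrder ι]
    {d : ℕ} (A : Matrix (Fin d) ι R) (B : Matrix ι (Fin d) R) :
    (A * B).det = ∑ s : {s : Finset ι // s.card = d},
      (A.submatrix id (s.1.orderEmbOfFin s.2)).det *
        (B.submatrix (s.1.orderEmbOfFin s.2) id).det := by
  rw [det_mul_eq_sum_prod_mul_det_submatrix, Finset.sum_eq_sum_orderEmbOfFin_comp_perm]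
  · refine sum_congr rfl fun s _ => ?_
    set e := s.1.orderEmbOfFin s.2
    calc ∑ σ : Equiv.Perm (Fin d), (∏ k, A k (e (σ k))) * (B.submatrix (e ∘ σ) id).det
        = ∑ σ : Equiv.Perm (Fin d), (Equiv.Perm.sign σ *
            ∏ k, (A.submatrix id e)ᵀ (σ k) k) * (B.submatrix e id).det := by
          refine sum_congr rfl fun σ _ => ?_
          rw [show B.submatrix (e ∘ σ) id = (B.submatrix e id).submatrix σ id from rfl,
            det_permute]
          simp only [transpose_apply, submatrix_apply, id]
          ring
      _ = _ := by rw [← sum_mul, ← det_apply', det_transpose]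
  · intro f hf
    obtain ⟨a, b, hab, hne⟩ := Function.not_injective_iff.mp hf
    rw [det_zero_of_row_eq hne (by ext; simp [hab]), mul_zero]

theorem det_mul_diagonal_mul_transpose {ι : Type*} [Fintype ι] [LinearOrder ι] {d : ℕ}
    (A : Matrix (Fin d) ι R) (w : ι → R) :
    (A * diagonal w * Aᵀ).det = ∑ s : {s : Finset ι // s.card = d},
      (∏ j ∈ s.1, w j) * (A.submatrix id (s.1.orderEmbOfFin s.2)).det ^ 2 := by
  rw [Matrix.mul_assoc, det_mul_eq_sum_det_submatrix_mul_det_submatrix]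
  refine sum_congr rfl fun s _ => ?_
  set e := s.1.orderEmbOfFin s.2
  have hsub : (diagonal w * Aᵀ).submatrix e id = diagonal (w ∘ e) * (A.submatrix id e)ᵀ := by
    ext; simp
  have hprod : ∏ k, w (e k) = ∏ j ∈ s.1, w j := by
    rw [← s.1.map_orderEmbOfFin_univ s.2, prod_map]; rfl
  rw [hsub, det_mul, det_diagonal, det_transpose, Function.comp_def, hprod]
  ring

theorem mul_diagonal_ite_mul_transpose_eq_add_vecMulVec {m ι : Type*} [Fintype ι] [DecidableEq ι]
    (A : Matrix m ι R) (i : ι) :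
    A * diagonal (fun j => if j = i then (2 : R) else 1) * Aᵀ =
      A * Aᵀ + vecMulVec (Aᵀ i) (Aᵀ i) := by
  ext k l
  have hw : ∀ j, A k j * (if j = i then (2 : R) else 1) * A l j =
      A k j * A l j + if j = i then A k j * A l j else 0 := by
    intro j; split_ifs <;> ring
  rw [add_apply, mul_apply, mul_apply, vecMulVec_apply]
  simp only [mul_diagonal, transpose_apply, hw, sum_add_distrib, sum_ite_eq', mem_univ, if_true]

theorem det_ne_zero_of_rank_eq_card {K : Type*} [Field K] {n : Type*} [Fintype n] [DecidableEq n]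
    {M : Matrix n n K} (h : M.rank = Fintype.card n) : M.det ≠ 0 := by
  have hrange : LinearMap.range M.mulVecLin = ⊤ :=
    Submodule.eq_top_of_finrank_eq (by rw [Module.finrank_fintype_fun_eq_card]; exact h)
  exact (isUnit_iff_isUnit_det M).mp
    (mulVec_surjective_iff_isUnit.mp (LinearMap.range_eq_top.mp hrange)) |>.ne_zero

end Matrix

theorem stmt_19 (d n : ℕ) (A : Matrix (Fin d) (Fin n) ℝ) (hA : A.rank = d)
    (P : Matrix (Fin n) (Fin n) ℝ) (hP : P = Aᵀ * (A * Aᵀ)⁻¹ * A) (i : Fin n) :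
    P i i =
      (∑ I : {s : Finset (Fin n) // s.card = d ∧ i ∈ s},
          ((A.submatrix id (I.1.orderEmbOfFin I.2.1)).det) ^ 2) /
      (∑ I : {s : Finset (Fin n) // s.card = d},
          ((A.submatrix id (I.1.orderEmbOfFin I.2)).det) ^ 2) := by
  set M := A * Aᵀ
  have hdet_gram : M.det = ∑ I : {s : Finset (Fin n) // s.card = d},
      (A.submatrix id (I.1.orderEmbOfFin I.2)).det ^ 2 := by
    simpa using det_mul_diagonal_mul_transpose A 1
  have hdet_ne : M.det ≠ 0 :=
    det_ne_zero_of_rank_eq_card (by rw [rank_self_mul_transpose, hA, Fintype.card_fin])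
  let w : Fin n → ℝ := fun j => if j = i then 2 else 1
  have hdet_weighted : (A * diagonal w * Aᵀ).det =
      M.det + ∑ I : {s : Finset (Fin n) // s.card = d ∧ i ∈ s},
        (A.submatrix id (I.1.orderEmbOfFin I.2.1)).det ^ 2 := by
    rw [det_mul_diagonal_mul_transpose, hdet_gram,
      sum_card_eq_and_mem_eq_sum_ite i fun s h => (A.submatrix id (s.orderEmbOfFin h)).det ^ 2,
      ← sum_add_distrib]
    refine sum_congr rfl fun s _ => ?_
    simp only [w, prod_ite_eq']
    split_ifs <;> ring
  have hdet_rankOne : (A * diagonal w * Aᵀ).det = M.det * (1 + P i i) := by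
    rw [mul_diagonal_ite_mul_transpose_eq_add_vecMulVec, vecMulVec_eq Unit,
      det_add_replicateCol_mul_replicateRow (isUnit_iff_ne_zero.mpr hdet_ne),
      det_unique (n := Unit), hP]
    simp [mul_apply, mul_sum, mul_comm, M]
  rw [← hdet_gram, eq_div_iff hdet_ne]
  linarith
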